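/- (Exact per-step solution of the DDS-DDIM probability-flow ODE.) Fix η > 0, a vector c ∈ ℝ^d, a time b > 0, and a terminal value z_b ∈ ℝ^d. Define h(η, u) = −arctan( η / √(u^{−1} − 1) ) for u ∈ (0,1), and define z : (0, b] → ℝ^d by z(s) = √( (η² − 1) e^{−2s} + 1 ) · [ z_b / √( (η² − 1) e^{−2b} + 1 ) + ( h(η, e^{−2s}) − h(η, e^{−2b}) ) · c ] (note (η² − 1) e^{−2s} + 1 = (η² − 1 + e^{2s}) e^{−2s} > 0 for all s > 0). Then z(b) = z_b, z is differentiable on (0, b), and for every s ∈ (0, b): z'(s) = − ( (η² − 1)/(η² + e^{2s} − 1) ) · z(s) + ( η e^{s} / ( √(e^{2s} − 1) · √(η² + e^{2s} − 1) ) ) · c. -/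

import Mathlib

/-- `h(η, u) = −arctan( η / √(u⁻¹ − 1) )` for `u ∈ (0,1)`. -/
noncomputable def hFun (η u : ℝ) : ℝ :=
  -Real.arctan (η / Real.sqrt (u⁻¹ - 1))

/-- The exact per-step solution of the DDS-DDIM probability-flow ODE, with the score/noise
term frozen to the constant vector `c` on the step and terminal value `z_b` at time `b`. -/
noncomputable def zSol {d : ℕ} (η b : ℝ) (c zb : EuclideanSpace ℝ (Fin d)) (s : ℝ) :
    EuclideanSpace ℝ (Fin d) :=
  Real.sqrt ((η ^ 2 - 1) * Real.exp (-2 * s) + 1) •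
    ((Real.sqrt ((η ^ 2 - 1) * Real.exp (-2 * b) + 1))⁻¹ • zb
      + (hFun η (Real.exp (-2 * s)) - hFun η (Real.exp (-2 * b))) • c)

/-!
Write `z(s) = A(s) • w(s)` with `A(s) = √((η² − 1) e^{−2s} + 1) = e^{−s} √(η² + e^{2s} − 1)` and
`w(s) = A(b)⁻¹ z_b + (h(η, e^{−2s}) − h(η, e^{−2b})) c`. A direct computation gives
`A' = −((η² − 1)/(η² + e^{2s} − 1)) A`, while `w' = (d/ds h(η, e^{−2s})) c` and `A · d/ds h(η, e^{−2s})`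
is exactly the coefficient of `c` in the ODE, so the product rule yields the claim.
-/

open Real

lemma exp_two_mul_sub_one_pos {s : ℝ} (hs : 0 < s) : 0 < exp (2 * s) - 1 := by
  rw [sub_pos, one_lt_exp_iff]
  positivity

lemma sq_add_exp_two_mul_sub_one_pos (η : ℝ) {s : ℝ} (hs : 0 < s) :
    0 < η ^ 2 + exp (2 * s) - 1 := by
  nlinarith [exp_two_mul_sub_one_pos hs]

lemma sq_sub_one_mul_exp_add_one_eq (η s : ℝ) :
    (η ^ 2 - 1) * exp (-2 * s) + 1 = (η ^ 2 + exp (2 * s) - 1) * exp (-2 * s) := by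
  have : exp (2 * s) * exp (-2 * s) = 1 := by rw [← exp_add]; simp
  linear_combination -this

lemma sq_sub_one_mul_exp_add_one_pos (η : ℝ) {s : ℝ} (hs : 0 < s) :
    0 < (η ^ 2 - 1) * exp (-2 * s) + 1 := by
  rw [sq_sub_one_mul_exp_add_one_eq]
  exact mul_pos (sq_add_exp_two_mul_sub_one_pos η hs) (exp_pos _)

lemma sqrt_sq_sub_one_mul_exp_add_one (η : ℝ) {s : ℝ} (hs : 0 < s) :
    √((η ^ 2 - 1) * exp (-2 * s) + 1) = √(η ^ 2 + exp (2 * s) - 1) * exp (-s) := by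
  rw [sq_sub_one_mul_exp_add_one_eq, sqrt_mul (sq_add_exp_two_mul_sub_one_pos η hs).le,
    show -2 * s = -s + -s by ring, exp_add, sqrt_mul_self (exp_pos _).le]

lemma hasDerivAt_sqrt_sq_sub_one_mul_exp_add_one (η : ℝ) {s : ℝ}
    (hpos : 0 < (η ^ 2 - 1) * exp (-2 * s) + 1) :
    HasDerivAt (fun t ↦ √((η ^ 2 - 1) * exp (-2 * t) + 1))
      (-((η ^ 2 - 1) / (η ^ 2 + exp (2 * s) - 1)) * √((η ^ 2 - 1) * exp (-2 * s) + 1)) s := by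
  have hrad := (((hasDerivAt_const_mul (x := s) (-2 : ℝ)).exp).const_mul (η ^ 2 - 1)).add_const 1
  refine (hrad.sqrt hpos.ne').congr_deriv ?_
  have heq := sq_sub_one_mul_exp_add_one_eq η s
  have hK : 0 < η ^ 2 + exp (2 * s) - 1 :=
    pos_of_mul_pos_left (heq ▸ hpos) (exp_pos _).le
  have hsq := sq_sqrt hpos.le
  have := sqrt_pos.2 hpos
  set E := exp (-2 * s)
  field_simp
  linear_combination (η ^ 2 - 1) * (hsq + heq)

lemma hFun_exp_neg_two_mul (η s : ℝ) :
    hFun η (exp (-2 * s)) = -arctan (η / √(exp (2 * s) - 1)) := by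
  rw [hFun, ← exp_neg]
  ring_nf

lemma hasDerivAt_hFun_exp_neg_two_mul (η : ℝ) {s : ℝ} (hs : 0 < s) :
    HasDerivAt (fun t ↦ hFun η (exp (-2 * t)))
      (η * exp (2 * s) / (√(exp (2 * s) - 1) * (η ^ 2 + exp (2 * s) - 1))) s := by
  simp only [hFun_exp_neg_two_mul]
  have hD := exp_two_mul_sub_one_pos hs
  have hq := sqrt_pos.2 hD
  have hsqrt := (((hasDerivAt_const_mul (x := s) (2 : ℝ)).exp).sub_const 1).sqrt hD.ne'
  refine ((hasDerivAt_const s η).fun_div hsqrt hq.ne').arctan.neg.congr_deriv ?_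
  have hsq := sq_sqrt hD.le
  have := sq_add_exp_two_mul_sub_one_pos η hs
  set F := exp (2 * s)
  field_simp
  rw [hsq]
  ring

lemma sqrt_sq_sub_one_mul_exp_add_one_mul_div (η : ℝ) {s : ℝ} (hs : 0 < s) :
    √((η ^ 2 - 1) * exp (-2 * s) + 1) *
        (η * exp (2 * s) / (√(exp (2 * s) - 1) * (η ^ 2 + exp (2 * s) - 1)))
      = η * exp s / (√(exp (2 * s) - 1) * √(η ^ 2 + exp (2 * s) - 1)) := by
  have hK := sq_add_exp_two_mul_sub_one_pos η hs
  have hsqK := sq_sqrt hK.le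
  have := sqrt_pos.2 hK
  have := sqrt_pos.2 (exp_two_mul_sub_one_pos hs)
  rw [sqrt_sq_sub_one_mul_exp_add_one η hs, exp_neg]
  set K := η ^ 2 + exp (2 * s) - 1
  rw [show exp (2 * s) = exp s * exp s by rw [← exp_add, two_mul]]
  field_simp
  rw [hsqK]
  ring

theorem stmt17_general {d : ℕ} (η : ℝ) (b : ℝ) (hb : 0 < b)
    (c zb : EuclideanSpace ℝ (Fin d)) :
    zSol η b c zb b = zb
      ∧ ∀ s ∈ Set.Ioo (0 : ℝ) b,
        HasDerivAt (zSol η b c zb)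
          (-((η ^ 2 - 1) / (η ^ 2 + Real.exp (2 * s) - 1)) • zSol η b c zb s
            + (η * Real.exp s /
                (Real.sqrt (Real.exp (2 * s) - 1) * Real.sqrt (η ^ 2 + Real.exp (2 * s) - 1))) • c)
          s := by
  refine ⟨?_, fun s ⟨hs, _⟩ ↦ ?_⟩
  · have hne := (sqrt_pos.2 (sq_sub_one_mul_exp_add_one_pos η hb)).ne'
    simp only [zSol, sub_self, zero_smul, add_zero, smul_smul, mul_inv_cancel₀ hne, one_smul]
  · have hw := (((hasDerivAt_hFun_exp_neg_two_mul η hs).sub_const (hFun η (exp (-2 * b)))).smul_const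
      c).const_add ((√((η ^ 2 - 1) * exp (-2 * b) + 1))⁻¹ • zb)
    refine ((hasDerivAt_sqrt_sq_sub_one_mul_exp_add_one η
      (sq_sub_one_mul_exp_add_one_pos η hs)).smul hw).congr_deriv ?_
    rw [← sqrt_sq_sub_one_mul_exp_add_one_mul_div η hs, zSol, mul_smul, mul_smul, add_comm]

/-- `z(b) = z_b`, and on `(0, b)` the curve `z` solves
`z'(s) = −((η²−1)/(η²+e^{2s}−1)) z(s) + (η e^s / (√(e^{2s}−1) √(η²+e^{2s}−1))) c`. -/
theorem stmt17 {d : ℕ} (η : ℝ) (hη : 0 < η) (b : ℝ) (hb : 0 < b)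
    (c zb : EuclideanSpace ℝ (Fin d)) :
    zSol η b c zb b = zb
      ∧ ∀ s ∈ Set.Ioo (0 : ℝ) b,
        HasDerivAt (zSol η b c zb)
          (-((η ^ 2 - 1) / (η ^ 2 + Real.exp (2 * s) - 1)) • zSol η b c zb s
            + (η * Real.exp s /
                (Real.sqrt (Real.exp (2 * s) - 1) * Real.sqrt (η ^ 2 + Real.exp (2 * s) - 1))) • c)
          s :=
  stmt17_general η b hb c zb
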